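/- arXiv:0905.1898 — 2 statements merged into one kernel-verified Lean document; each statement's English description precedes it below -/
import Mathlib

section
/- Let G be a finite group, F a field, and A a subalgebra of the group algebra F[G]. Then A is an S-ring if and only if A is closed under the Hadamard product ∘ and under the map x ↦ x^{(-1)}, and A contains both 1 and Ḡ. -/
open scoped Classical

noncomputable section

/-- The Hadamard (pointwise) product on the group algebra. -/
def had {F : Type*} [Field F] {G : Type*} [Group G] (x y : MonoidAlgebra F G) :
    MonoidAlgebra F G :=
  MonoidAlgebra.ofCoeff (Finsupp.zipWith (· * ·) (mul_zero 0) x.coeff y.coeff)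

/-- `x ↦ x^{(-1)}`, sending `∑ a_g g` to `∑ a_g g⁻¹`. -/
def invol {F : Type*} [Field F] {G : Type*} [Group G] (x : MonoidAlgebra F G) :
    MonoidAlgebra F G :=
  MonoidAlgebra.ofCoeff (Finsupp.mapDomain (fun g => g⁻¹) x.coeff)

/-- The simple quantity `C̄ = ∑_{g ∈ C} g` of a subset `C ⊆ G`. -/
def sqty (F : Type*) [Field F] {G : Type*} [Group G] [Fintype G] (C : Set G) :
    MonoidAlgebra F G :=
  ∑ g ∈ Finset.univ.filter (· ∈ C), MonoidAlgebra.single g (1 : F)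

/-- A (not necessarily unital) subalgebra `A` of `F[G]` is an S-ring if there are disjoint
nonempty subsets `T_1, …, T_k` of `G` whose simple quantities form an `F`-basis of `A`,
such that some `T_i` is `{1}`, the `T_i` cover `G`, and each `T_i^{(-1)}` is some `T_j`. -/
def IsSRingComb {F : Type*} [Field F] {G : Type*} [Group G] [Fintype G]
    (A : NonUnitalSubalgebra F (MonoidAlgebra F G)) : Prop :=
  ∃ (k : ℕ) (T : Fin k → Set G),
    (∀ i, (T i).Nonempty) ∧
    (∀ i j, i ≠ j → Disjoint (T i) (T j)) ∧
    LinearIndependent F (fun i => sqty F (T i)) ∧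
    (A : Set (MonoidAlgebra F G)) =
      (Submodule.span F (Set.range fun i => sqty F (T i)) : Set (MonoidAlgebra F G)) ∧
    (∃ i, T i = ({1} : Set G)) ∧
    (⋃ i, T i) = (Set.univ : Set G) ∧
    (∀ i, ∃ j, (fun g => g⁻¹) '' T i = T j)

/-! The basic sets of an S-ring are pairwise disjoint, so `T̄ᵢ ∘ T̄ⱼ = (Tᵢ ∩ Tⱼ)‾` is `T̄ᵢ` or `0`,
while `T̄ᵢ^{(-1)}` is again a basic quantity; `1` and `Ḡ` are sums of basic quantities.

Conversely, call `g` and `h` equivalent when every element of `A` has the same coefficient at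
`g` and at `h`. For each `h` not equivalent to `g`, an affine combination of `Ḡ` and an element of
`A` separating `g` from `h` takes the value `1` at `g` and `0` at `h`; the Hadamard product of these
is the simple quantity of the class of `g`, which therefore lies in `A`. Elements of `A` are
constant on classes, so these simple quantities span `A`. The class of `1` is `{1}` because
`1 ∈ A`, and inversion permutes the classes because `A` is closed under `x ↦ x^{(-1)}`. -/

open Function

lemma mem_iff_eq_of_pairwise_disjoint {α ι : Type*} {T : ι → Set α}
    (hT : Pairwise (Disjoint on T)) {a : α} {i : ι} (ha : a ∈ T i) (j : ι) : a ∈ T j ↔ j = i :=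
  ⟨fun hj => by_contra fun hji => Set.disjoint_left.mp (hT hji) hj ha, by rintro rfl; exact ha⟩

section GroupAlgebra

variable {F : Type*} [Field F] {G : Type*} [Group G]

@[simp]
lemma coeff_had (x y : MonoidAlgebra F G) (g : G) :
    (had x y).coeff g = x.coeff g * y.coeff g := rfl

@[simp]
lemma coeff_invol (x : MonoidAlgebra F G) (g : G) : (invol x).coeff g = x.coeff g⁻¹ := by
  simpa [invol] using Finsupp.mapDomain_apply inv_injective x.coeff g⁻¹

lemma coeff_one_apply (g : G) : (1 : MonoidAlgebra F G).coeff g = if g = 1 then 1 else 0 := by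
  simp [MonoidAlgebra.one_def, Finsupp.single_apply, eq_comm]

def hadₗ : MonoidAlgebra F G →ₗ[F] MonoidAlgebra F G →ₗ[F] MonoidAlgebra F G :=
  LinearMap.mk₂ F had
    (fun _ _ _ => by ext; simp [add_mul]) (fun _ _ _ => by ext; simp [mul_assoc])
    (fun _ _ _ => by ext; simp [mul_add]) (fun _ _ _ => by ext; simp [mul_left_comm])

def involₗ : MonoidAlgebra F G →ₗ[F] MonoidAlgebra F G where
  toFun := invol
  map_add' _ _ := by ext; simp
  map_smul' _ _ := by ext; simp

lemma had_mem_span {S : Set (MonoidAlgebra F G)}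
    (hS : ∀ u ∈ S, ∀ v ∈ S, had u v ∈ Submodule.span F S) :
    ∀ x ∈ Submodule.span F S, ∀ y ∈ Submodule.span F S, had x y ∈ Submodule.span F S := by
  have : Submodule.map₂ hadₗ (Submodule.span F S) (Submodule.span F S) ≤
      Submodule.span F S := by
    rw [Submodule.map₂_span_span, Submodule.span_le]
    rintro _ ⟨u, hu, v, hv, rfl⟩
    exact hS u hu v hv
  exact Submodule.map₂_le.mp this

lemma invol_mem_span {S : Set (MonoidAlgebra F G)}
    (hS : ∀ u ∈ S, invol u ∈ Submodule.span F S) :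
    ∀ x ∈ Submodule.span F S, invol x ∈ Submodule.span F S := by
  have : Submodule.span F S ≤ (Submodule.span F S).comap involₗ :=
    Submodule.span_le.mpr hS
  exact fun x hx => this hx

def coeffSetoid (A : NonUnitalSubalgebra F (MonoidAlgebra F G)) : Setoid G where
  r g h := ∀ x ∈ A, x.coeff g = x.coeff h
  iseqv := ⟨fun _ _ _ => rfl, fun h x hx => (h x hx).symm,
    fun h₁ h₂ x hx => (h₁ x hx).trans (h₂ x hx)⟩

variable {A : NonUnitalSubalgebra F (MonoidAlgebra F G)}

lemma coeffSetoid_inv (hA : ∀ x ∈ A, invol x ∈ A) {g h : G}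
    (hgh : coeffSetoid A g h) : coeffSetoid A g⁻¹ h⁻¹ := fun x hx => by
  simpa using hgh (invol x) (hA x hx)

lemma eq_one_of_coeffSetoid_one (hA : 1 ∈ A) {g : G}
    (hg : coeffSetoid A g 1) : g = 1 := by
  by_contra hg1
  simpa [coeff_one_apply, hg1] using hg 1 hA

variable [Fintype G]

@[simp]
lemma coeff_sqty (C : Set G) (g : G) : (sqty F C).coeff g = if g ∈ C then 1 else 0 := by
  simp [sqty, Finsupp.single_apply]

lemma had_sqty_sqty (C D : Set G) : had (sqty F C) (sqty F D) = sqty F (C ∩ D) := by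
  ext g
  simp only [coeff_had, coeff_sqty, Set.mem_inter_iff]
  split_ifs <;> simp_all

lemma invol_sqty (C : Set G) : invol (sqty F C) = sqty F ((fun g => g⁻¹) '' C) := by
  ext g
  simp [Set.image_inv_eq_inv]

lemma sqty_empty : sqty F (∅ : Set G) = 0 := by
  ext g
  simp

lemma sqty_singleton_one : sqty F ({1} : Set G) = 1 := by
  ext g
  simp [coeff_one_apply]

lemma sqty_iUnion {ι : Type*} [Fintype ι] {T : ι → Set G} (hT : Pairwise (Disjoint on T)) :
    sqty F (⋃ i, T i) = ∑ i, sqty F (T i) := by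
  ext g
  simp only [MonoidAlgebra.coeff_sum, Finsupp.finsetSum_apply, coeff_sqty]
  by_cases hg : g ∈ ⋃ i, T i
  · obtain ⟨i, hi⟩ := Set.mem_iUnion.mp hg
    simp [hg, mem_iff_eq_of_pairwise_disjoint hT hi]
  · simp_all

lemma linearIndependent_sqty {ι : Type*} {T : ι → Set G} (hne : ∀ i, (T i).Nonempty)
    (hT : Pairwise (Disjoint on T)) : LinearIndependent F (fun i => sqty F (T i)) := by
  rw [linearIndependent_iff']
  intro s c hc i hi
  obtain ⟨g, hg⟩ := hne i
  simpa [mem_iff_eq_of_pairwise_disjoint hT hg, hi] using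
    congr_arg (fun x : MonoidAlgebra F G => x.coeff g) hc

theorem closed_of_isSRingComb (hA : IsSRingComb A) :
    (∀ x ∈ A, ∀ y ∈ A, had x y ∈ A) ∧ (∀ x ∈ A, invol x ∈ A) ∧
      (1 : MonoidAlgebra F G) ∈ A ∧ sqty F (Set.univ : Set G) ∈ A := by
  obtain ⟨k, T, -, hdisj, -, hspan, ⟨i₁, hi₁⟩, hcover, hinv⟩ := hA
  have hT : Pairwise (Disjoint on T) := hdisj
  set S := Set.range fun i => sqty F (T i)
  have mem_A : ∀ x, x ∈ A ↔ x ∈ Submodule.span F S := fun x => by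
    rw [← SetLike.mem_coe, hspan, SetLike.mem_coe]
  have basic_mem : ∀ i, sqty F (T i) ∈ Submodule.span F S :=
    fun i => Submodule.subset_span ⟨i, rfl⟩
  simp only [mem_A]
  refine ⟨had_mem_span ?_, invol_mem_span ?_, ?_, ?_⟩
  · rintro _ ⟨i, rfl⟩ _ ⟨j, rfl⟩
    rw [had_sqty_sqty]
    obtain rfl | hij := eq_or_ne i j
    · rw [Set.inter_self]
      exact basic_mem i
    · rw [Set.disjoint_iff_inter_eq_empty.mp (hT hij), sqty_empty]
      exact Submodule.zero_mem _
  · rintro _ ⟨i, rfl⟩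
    obtain ⟨j, hj⟩ := hinv i
    rw [invol_sqty, hj]
    exact basic_mem j
  · rw [← sqty_singleton_one, ← hi₁]
    exact basic_mem i₁
  · rw [← hcover, sqty_iUnion hT]
    exact Submodule.sum_mem _ fun i _ => basic_mem i

lemma exists_mem_coeff_eq_one_of_not_coeffSetoid (huniv : sqty F Set.univ ∈ A) {g h : G}
    (hgh : ¬ coeffSetoid A g h) : ∃ y ∈ A, y.coeff g = 1 ∧ y.coeff h = 0 := by
  obtain ⟨x, hx, hxgh⟩ : ∃ x ∈ A, x.coeff g ≠ x.coeff h := by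
    by_contra! hall
    exact hgh hall
  refine ⟨(x.coeff g - x.coeff h)⁻¹ • (x - x.coeff h • sqty F Set.univ),
    SMulMemClass.smul_mem _ (sub_mem hx (SMulMemClass.smul_mem _ huniv)), ?_, ?_⟩
  · simp [inv_mul_cancel₀ (sub_ne_zero.mpr hxgh)]
  · simp

lemma sqty_coeffSetoid_mem (hhad : ∀ x ∈ A, ∀ y ∈ A, had x y ∈ A)
    (huniv : sqty F Set.univ ∈ A) (g : G) : sqty F {h | coeffSetoid A g h} ∈ A := by
  have hsep : ∀ s : Finset G,
      ∃ z ∈ A, z.coeff g = 1 ∧ ∀ h ∈ s, ¬ coeffSetoid A g h → z.coeff h = 0 := by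
    intro s
    induction s using Finset.induction_on with
    | empty => exact ⟨_, huniv, by simp, by simp⟩
    | insert h s _ ih =>
      obtain ⟨z, hz, hzg, hzs⟩ := ih
      by_cases hgh : coeffSetoid A g h
      · exact ⟨z, hz, hzg, by simp_all⟩
      obtain ⟨y, hy, hyg, hyh⟩ := exists_mem_coeff_eq_one_of_not_coeffSetoid huniv hgh
      refine ⟨had z y, hhad z hz y hy, by simp [hzg, hyg], ?_⟩
      simp only [Finset.mem_insert, coeff_had]
      rintro h' (rfl | hh') hgh'
      · rw [hyh, mul_zero]
      · rw [hzs h' hh' hgh', zero_mul]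
  obtain ⟨z, hz, hzg, hz0⟩ := hsep Finset.univ
  convert hz
  ext h
  rw [coeff_sqty, Set.mem_ofPred_eq]
  split_ifs with hgh
  · rw [← hgh z hz, hzg]
  · rw [hz0 h (Finset.mem_univ h) hgh]

lemma eq_sum_smul_sqty_fiber {s : Setoid G} [Fintype (Quotient s)] {x : MonoidAlgebra F G}
    (hx : ∀ g h, s g h → x.coeff g = x.coeff h) :
    x = ∑ q : Quotient s, x.coeff q.out • sqty F (Quotient.mk s ⁻¹' {q}) := by
  ext g
  simp [Finsupp.finsetSum_apply, hx _ _ (Quotient.mk_out g)]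

theorem isSRingComb_of_fintype {ι : Type*} [Fintype ι] (T : ι → Set G)
    (hne : ∀ i, (T i).Nonempty) (hdisj : Pairwise (Disjoint on T))
    (hspan : (A : Set (MonoidAlgebra F G)) = Submodule.span F (Set.range fun i => sqty F (T i)))
    (hone : ∃ i, T i = {1}) (hcover : ⋃ i, T i = Set.univ)
    (hinv : ∀ i, ∃ j, (fun g => g⁻¹) '' T i = T j) : IsSRingComb A := by
  let e := Fintype.equivFin ι
  refine ⟨_, T ∘ e.symm, fun i => hne _, fun i j hij => hdisj (e.symm.injective.ne hij),
    (linearIndependent_sqty hne hdisj).comp _ e.symm.injective, ?_, ?_, ?_, ?_⟩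
  · rw [hspan, ← e.symm.surjective.range_comp]
    rfl
  · obtain ⟨i, hi⟩ := hone
    exact ⟨e i, by simpa⟩
  · rw [← hcover]
    exact e.symm.surjective.iUnion_comp T
  · intro i
    obtain ⟨j, hj⟩ := hinv (e.symm i)
    exact ⟨e j, by rwa [comp_apply, comp_apply, Equiv.symm_apply_apply]⟩

theorem isSRingComb_of_closed (hhad : ∀ x ∈ A, ∀ y ∈ A, had x y ∈ A) (hinv : ∀ x ∈ A, invol x ∈ A)
    (hone : (1 : MonoidAlgebra F G) ∈ A) (huniv : sqty F (Set.univ : Set G) ∈ A) :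
    IsSRingComb A := by
  have fiber_eq (g : G) : Quotient.mk (coeffSetoid A) ⁻¹' {⟦g⟧} = {h | coeffSetoid A g h} := by
    ext h
    exact Quotient.eq.trans ⟨(coeffSetoid A).symm, (coeffSetoid A).symm⟩
  refine isSRingComb_of_fintype
    (fun q : Quotient (coeffSetoid A) => Quotient.mk (coeffSetoid A) ⁻¹' {q})
    (fun q => q.exists_rep) (pairwise_disjoint_fiber _) ?_ ⟨⟦1⟧, ?_⟩
    (Set.iUnion_eq_univ_iff.mpr fun g => ⟨⟦g⟧, rfl⟩) ?_
  · apply subset_antisymm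
    · intro x hx
      rw [eq_sum_smul_sqty_fiber fun g h (hgh : coeffSetoid A g h) => hgh x hx]
      exact Submodule.sum_mem _ fun q _ =>
        Submodule.smul_mem _ _ (Submodule.subset_span ⟨q, rfl⟩)
    · refine Submodule.span_le (p := A.toSubmodule) |>.mpr ?_
      rintro _ ⟨q, rfl⟩
      induction q using Quotient.inductionOn with
      | h g =>
        show sqty F (Quotient.mk _ ⁻¹' {⟦g⟧}) ∈ A
        rw [fiber_eq]
        exact sqty_coeffSetoid_mem hhad huniv g
  · ext g
    rw [fiber_eq, Set.mem_ofPred_eq, Set.mem_singleton_iff]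
    exact ⟨fun h => eq_one_of_coeffSetoid_one hone ((coeffSetoid A).symm h),
      fun h => h ▸ (coeffSetoid A).refl _⟩
  · intro q
    induction q using Quotient.inductionOn with
    | h g =>
      refine ⟨⟦g⁻¹⟧, ?_⟩
      ext h
      simp only [Set.image_inv_eq_inv, Set.mem_inv, fiber_eq, Set.mem_ofPred_eq]
      refine ⟨fun hgh => by simpa using coeffSetoid_inv hinv hgh, fun hgh => ?_⟩
      simpa using coeffSetoid_inv hinv hgh

end GroupAlgebra

/-- A subalgebra `A` of `F[G]` is an S-ring if and only if `A` is closed under the Hadamard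
product and under `x ↦ x^{(-1)}`, and contains both `1` and `Ḡ`. -/
theorem isSRing_iff_closed {F : Type*} [Field F] {G : Type*} [Group G] [Fintype G]
    (A : NonUnitalSubalgebra F (MonoidAlgebra F G)) :
    IsSRingComb A ↔ ((∀ x ∈ A, ∀ y ∈ A, had x y ∈ A) ∧ (∀ x ∈ A, invol x ∈ A) ∧
      (1 : MonoidAlgebra F G) ∈ A ∧ sqty F (Set.univ : Set G) ∈ A) :=
  ⟨closed_of_isSRingComb, fun ⟨hhad, hinv, hone, huniv⟩ =>
    isSRingComb_of_closed hhad hinv hone huniv⟩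
end
end

section
/- For every element g of G = Z_{p^{λ_1}} × ⋯ × Z_{p^{λ_n}} there is exactly one canonical tuple a = (a_1,…,a_n) (with 0 ≤ a_i ≤ λ_i for all i) such that the Aut(G)-orbit of g contains an element of type T(a); i.e., every automorphism class of G contains a unique canonical type. -/
/-!
Existence: start from the type `b` of `g`. While `b` is not canonical, some adjacent pair
`i, i + 1` violates it, and a transvection `g_k ↦ g_k + f (g_l)` of the pair raises one
exponent and leaves the others: if `b_i > b_{i+1}`, add to `g_{i+1}` the image of `g_i` under the
embedding `ℤ/p^{λ_i} ↪ ℤ/p^{λ_{i+1}}` (multiplication by `p^{λ_{i+1} - λ_i}`), which keeps the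
order `p^{b_i}`; otherwise add to `g_i` the reduction of `g_{i+1}` mod `p^{λ_i}`, of order
`p^{b_{i+1} - (λ_{i+1} - λ_i)} > p^{b_i}`. The defect `∑ (λ_i - b_i)` drops, so this terminates.

Uniqueness: membership in `p^s G + G[p^t]` is `Aut(G)`-invariant, and an element of type `a`
lies in it iff every `i` has `a_i ≤ t` or `s + a_i ≤ λ_i`. These conditions determine a
canonical `a` among all tuples `c ≤ λ`: if `a_i < c_i`, then `s = λ_i - c_i + 1`, `t = c_i - 1`
satisfy them for `a` (since `a` and `λ - a` are monotone) but not for `c`.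
-/

/-- A tuple `a` is canonical (w.r.t. `λ`) if `a_i ≤ a_{i+1}` and
`a_{i+1} − a_i ≤ λ_{i+1} − λ_i` for all consecutive indices. -/
def Canonical {n : ℕ} (lam a : Fin n → ℕ) : Prop :=
  ∀ i j : Fin n, (j : ℕ) = (i : ℕ) + 1 → a i ≤ a j ∧ a j + lam i ≤ a i + lam j

/-- The type `T(a)`: elements of `G = Z_{p^{λ_1}} × ⋯ × Z_{p^{λ_n}}` whose `i`-th component
has order exactly `p^{a_i}` for every `i`. -/
def TypeSet (p : ℕ) {n : ℕ} (lam : Fin n → ℕ) (a : Fin n → ℕ) :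
    Set (∀ i : Fin n, ZMod (p ^ lam i)) :=
  {g | ∀ i, addOrderOf (g i) = p ^ a i}

section PrimePowerOrder
variable {A : Type*} {p a b : ℕ}

lemma nsmul_prime_pow_eq_zero_iff [AddMonoid A] {x : A} (hp : 1 < p) (hx : addOrderOf x = p ^ b)
    {k : ℕ} : p ^ k • x = 0 ↔ b ≤ k := by
  rw [← addOrderOf_dvd_iff_nsmul_eq_zero, hx, Nat.pow_dvd_pow_iff_le_right hp]

lemma addOrderOf_eq_prime_pow_of_forall [AddMonoid A] {x : A} (hp : p.Prime)
    (h : ∀ k, p ^ k • x = 0 ↔ b ≤ k) : addOrderOf x = p ^ b := by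
  obtain ⟨c, hcb, hc⟩ :=
    (Nat.dvd_prime_pow hp).1 (addOrderOf_dvd_of_nsmul_eq_zero ((h b).2 le_rfl))
  rw [hc, le_antisymm hcb ((h c).1 (hc ▸ addOrderOf_nsmul_eq_zero x))]

lemma addOrderOf_prime_pow_nsmul [AddMonoid A] {x : A} (hp : p.Prime)
    (hx : addOrderOf x = p ^ b) (m : ℕ) : addOrderOf (p ^ m • x) = p ^ (b - m) :=
  addOrderOf_eq_prime_pow_of_forall hp fun k => by
    rw [smul_smul, ← pow_add, nsmul_prime_pow_eq_zero_iff hp.one_lt hx]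
    omega

lemma addOrderOf_add_eq_prime_pow [AddCommMonoid A] {x y : A} (hp : p.Prime)
    (hx : addOrderOf x = p ^ a) (hy : addOrderOf y = p ^ b) (hab : a < b) :
    addOrderOf (x + y) = p ^ b := by
  rw [← hy]
  refine (AddCommute.all x y).addOrderOf_add_eq_right_of_forall_prime_mul_dvd
    (addOrderOf_pos_iff.1 (hy ▸ pow_pos hp.pos b)) fun q hq hqx => ?_
  rw [hx] at hqx ⊢
  rw [hy, (Nat.prime_dvd_prime_iff_eq hq hp).1 (hq.dvd_of_dvd_pow hqx), ← pow_succ']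
  exact pow_dvd_pow p hab

end PrimePowerOrder

namespace ZMod

def primePowInclusion (p μ ν : ℕ) : ZMod (p ^ μ) →+ ZMod (p ^ ν) :=
  lift (p ^ μ) ⟨zmultiplesHom _ (p ^ (ν - μ) : ZMod (p ^ ν)), by
    rw [zmultiplesHom_apply, natCast_zsmul, nsmul_eq_mul, ← Nat.cast_pow p (ν - μ),
      ← Nat.cast_mul, ← pow_add, natCast_eq_zero_iff]
    exact pow_dvd_pow p (by omega)⟩

variable {p l μ ν : ℕ}

lemma nsmul_eq_zero_of_dvd {n m : ℕ} (h : n ∣ m) (x : ZMod n) : m • x = 0 := by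
  rw [nsmul_eq_mul, (natCast_eq_zero_iff m n).2 h, zero_mul]

lemma exists_addOrderOf_eq_prime_pow (hp : p.Prime) (x : ZMod (p ^ l)) :
    ∃ b ≤ l, addOrderOf x = p ^ b :=
  (Nat.dvd_prime_pow hp).1 (addOrderOf_dvd_of_nsmul_eq_zero (nsmul_eq_zero_of_dvd dvd_rfl x))

lemma primePowInclusion_natCast (m : ℕ) :
    primePowInclusion p μ ν m = p ^ (ν - μ) • (m : ZMod (p ^ ν)) := by
  rw [← Int.cast_natCast, primePowInclusion, lift_coe, zmultiplesHom_apply, natCast_zsmul,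
    nsmul_eq_mul, nsmul_eq_mul, mul_comm]
  push_cast
  rfl

variable [NeZero p]

lemma exists_prime_pow_nsmul_eq {x : ZMod (p ^ l)} {b s : ℕ} (hx : addOrderOf x = p ^ b)
    (h : s + b ≤ l) : ∃ y, p ^ s • y = x := by
  have hval : p ^ (l - b) ∣ x.val := by
    have hkill : p ^ b • ((x.val : ℕ) : ZMod (p ^ l)) = 0 := by
      rw [natCast_zmod_val, ← hx, addOrderOf_nsmul_eq_zero]
    rw [nsmul_eq_mul, ← Nat.cast_mul, natCast_eq_zero_iff] at hkill
    refine Nat.dvd_of_mul_dvd_mul_left (pow_pos (NeZero.pos p) b) ?_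
    rwa [← pow_add, Nat.add_sub_cancel' (by omega)]
  obtain ⟨y, hy⟩ := (pow_dvd_pow p (show s ≤ l - b by omega)).trans hval
  exact ⟨y.cast, by rw [nsmul_eq_mul, ← Nat.cast_mul, ← hy, natCast_zmod_val]⟩

lemma primePowInclusion_castHom (h : μ ≤ ν) (x : ZMod (p ^ ν)) :
    primePowInclusion p μ ν (castHom (pow_dvd_pow p h) _ x) = p ^ (ν - μ) • x := by
  rw [← natCast_zmod_val x, map_natCast, primePowInclusion_natCast]

lemma primePowInclusion_injective (h : μ ≤ ν) : Function.Injective (primePowInclusion p μ ν) := by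
  refine (injective_iff_map_eq_zero _).2 fun x hx => ?_
  rw [← natCast_zmod_val x, primePowInclusion_natCast, nsmul_eq_mul, ← Nat.cast_mul,
    natCast_eq_zero_iff, ← Nat.sub_add_cancel h, pow_add, Nat.add_sub_cancel] at hx
  rw [← natCast_zmod_val x, natCast_eq_zero_iff]
  exact Nat.dvd_of_mul_dvd_mul_left (pow_pos (NeZero.pos p) _) hx

lemma addOrderOf_primePowInclusion (h : μ ≤ ν) (x : ZMod (p ^ μ)) :
    addOrderOf (primePowInclusion p μ ν x) = addOrderOf x :=
  addOrderOf_injective _ (primePowInclusion_injective h) x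

lemma addOrderOf_castHom_prime_pow (hp : p.Prime) (h : μ ≤ ν) {x : ZMod (p ^ ν)} {b : ℕ}
    (hx : addOrderOf x = p ^ b) :
    addOrderOf (castHom (pow_dvd_pow p h) (ZMod (p ^ μ)) x) = p ^ (b - (ν - μ)) := by
  rw [← addOrderOf_primePowInclusion h, primePowInclusion_castHom h,
    addOrderOf_prime_pow_nsmul hp hx]

end ZMod

section Transvection
variable {ι : Type*} [DecidableEq ι] {B : ι → Type*} [∀ k, AddCommGroup (B k)]

def transvection (i j : ι) (hij : i ≠ j) (f : B j →+ B i) : AddAut (∀ k, B k) where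
  toFun g := Function.update g i (g i + f (g j))
  invFun g := Function.update g i (g i - f (g j))
  left_inv g := by
    ext k
    by_cases hk : k = i <;> simp [hk, hij.symm]
  right_inv g := by
    ext k
    by_cases hk : k = i <;> simp [hk, hij.symm]
  map_add' g h := by
    ext k
    rcases eq_or_ne k i with rfl | hk
    · simp only [Function.update_self, Pi.add_apply, map_add]
      abel
    · simp [hk]

lemma addOrderOf_transvection_apply {p : ℕ} (hp : p.Prime) {i j : ι} (hij : i ≠ j)
    (f : B j →+ B i) {g : ∀ k, B k} {b : ι → ℕ} {c : ℕ} (hg : ∀ k, addOrderOf (g k) = p ^ b k)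
    (hf : addOrderOf (f (g j)) = p ^ c) (hc : b i < c) (k : ι) :
    addOrderOf (transvection i j hij f g k) = p ^ Function.update b i c k := by
  rcases eq_or_ne k i with rfl | hk
  · simpa [transvection] using addOrderOf_add_eq_prime_pow hp (hg k) hf hc
  · simpa [transvection, Function.update_of_ne hk] using hg k

end Transvection

lemma Fin.monotone_of_le_of_val_eq_add_one {α : Type*} [Preorder α] {n : ℕ} {f : Fin n → α}
    (h : ∀ i j : Fin n, (j : ℕ) = i + 1 → f i ≤ f j) : Monotone f := by
  cases n with
  | zero => exact fun i => i.elim0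
  | succ n => exact Fin.monotone_iff_le_succ.2 fun i => h _ _ (by simp)

namespace Canonical
variable {n : ℕ} {lam a b : Fin n → ℕ}

lemma monotone (ha : Canonical lam a) : Monotone a :=
  Fin.monotone_of_le_of_val_eq_add_one fun i j hij => (ha i j hij).1

lemma monotone_sub (ha : Canonical lam a) : Monotone fun i => (lam i : ℤ) - a i :=
  Fin.monotone_of_le_of_val_eq_add_one fun i j hij => by have := (ha i j hij).2; omega

lemma le_of_forall_imp (ha : Canonical lam a) (hb : ∀ i, b i ≤ lam i)
    (h : ∀ s t, (∀ k, a k ≤ t ∨ s + a k ≤ lam k) → ∀ k, b k ≤ t ∨ s + b k ≤ lam k)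
    (i : Fin n) : b i ≤ a i := by
  by_contra! hlt
  have hbi := hb i
  have := h (lam i - b i + 1) (b i - 1) (fun k => ?_) i
  · omega
  rcases le_total k i with hki | hik
  · have := ha.monotone hki
    omega
  · have : (lam i : ℤ) - a i ≤ lam k - a k := ha.monotone_sub hik
    omega

end Canonical

section NSMulAddTorsion

def nsmulAddTorsion (A : Type*) [AddMonoid A] (m k : ℕ) : Set A :=
  {x | ∃ y z : A, x = m • y + z ∧ k • z = 0}

variable {A B : Type*} [AddMonoid A] [AddMonoid B] {m k : ℕ}

lemma AddEquiv.map_mem_nsmulAddTorsion_iff (φ : A ≃+ B) {x : A} :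
    φ x ∈ nsmulAddTorsion B m k ↔ x ∈ nsmulAddTorsion A m k := by
  simp only [nsmulAddTorsion, Set.mem_ofPred_eq, φ.surjective.exists, ← map_nsmul, ← map_add,
    φ.apply_eq_iff_eq, map_eq_zero_iff φ φ.injective]

lemma Pi.mem_nsmulAddTorsion_iff {ι : Type*} {B : ι → Type*} [∀ i, AddMonoid (B i)]
    {x : ∀ i, B i} :
    x ∈ nsmulAddTorsion (∀ i, B i) m k ↔ ∀ i, x i ∈ nsmulAddTorsion (B i) m k := by
  refine ⟨fun ⟨y, z, hx, hz⟩ i => ⟨y i, z i, congrFun hx i, congrFun hz i⟩, fun h => ?_⟩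
  choose y z hx hz using h
  exact ⟨y, z, funext hx, funext hz⟩

lemma ZMod.mem_nsmulAddTorsion_iff {p l a : ℕ} [NeZero p] (hp : 1 < p) {x : ZMod (p ^ l)}
    (hx : addOrderOf x = p ^ a) (s t : ℕ) :
    x ∈ nsmulAddTorsion _ (p ^ s) (p ^ t) ↔ a ≤ t ∨ s + a ≤ l := by
  constructor
  · rintro ⟨y, z, rfl, hz⟩
    by_cases hst : s + t ≤ l
    · right
      suffices p ^ (l - s) • (p ^ s • y + z) = 0 by
        have := (nsmul_prime_pow_eq_zero_iff hp hx).1 this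
        omega
      rw [nsmul_add, smul_smul, ← pow_add, Nat.sub_add_cancel (by omega),
        nsmul_eq_zero_of_dvd dvd_rfl, zero_add, show l - s = t + (l - s - t) by omega, pow_add,
        mul_nsmul, hz, nsmul_zero]
    · left
      refine (nsmul_prime_pow_eq_zero_iff hp hx).1 ?_
      rw [nsmul_add, hz, add_zero, smul_smul, ← pow_add,
        nsmul_eq_zero_of_dvd (pow_dvd_pow p (by omega))]
  · rintro (hat | hsal)
    · exact ⟨0, x, by simp, (nsmul_prime_pow_eq_zero_iff hp hx).2 hat⟩
    · obtain ⟨y, rfl⟩ := exists_prime_pow_nsmul_eq hx hsal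
      exact ⟨y, 0, by simp, by simp⟩

lemma mem_nsmulAddTorsion_iff_of_mem_typeSet {p n : ℕ} [NeZero p] (hp : 1 < p)
    {lam a : Fin n → ℕ} {x : ∀ i, ZMod (p ^ lam i)} (hx : x ∈ TypeSet p lam a) (s t : ℕ) :
    x ∈ nsmulAddTorsion _ (p ^ s) (p ^ t) ↔ ∀ i, a i ≤ t ∨ s + a i ≤ lam i := by
  rw [Pi.mem_nsmulAddTorsion_iff]
  exact forall_congr' fun i => ZMod.mem_nsmulAddTorsion_iff hp (hx i) s t

end NSMulAddTorsion

lemma sum_tsub_update_lt {ι : Type*} [Fintype ι] [DecidableEq ι] {lam b : ι → ℕ} {k : ι}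
    {c : ℕ} (hbc : b k < c) (hc : c ≤ lam k) :
    ∑ i, (lam i - Function.update b k c i) < ∑ i, (lam i - b i) := by
  refine Finset.sum_lt_sum (fun i _ => ?_)
    ⟨k, Finset.mem_univ k, by rw [Function.update_self]; omega⟩
  rcases eq_or_ne i k with rfl | hi
  · rw [Function.update_self]; omega
  · rw [Function.update_of_ne hi]

section Existence
variable {p n : ℕ} [NeZero p] {lam : Fin n → ℕ}

lemma exists_addAut_raise_of_not_canonical (hp : p.Prime) (hmono : Monotone lam)
    {g : ∀ i, ZMod (p ^ lam i)} {b : Fin n → ℕ} (hb : ∀ i, b i ≤ lam i)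
    (hg : g ∈ TypeSet p lam b) (hnc : ¬ Canonical lam b) :
    ∃ (ψ : AddAut (∀ i, ZMod (p ^ lam i))) (k : Fin n) (c : ℕ), b k < c ∧ c ≤ lam k ∧
      ψ g ∈ TypeSet p lam (Function.update b k c) := by
  obtain ⟨i, j, hji, hbad⟩ : ∃ i j : Fin n, (j : ℕ) = i + 1 ∧
      ¬(b i ≤ b j ∧ b j + lam i ≤ b i + lam j) := by
    simpa [Canonical] using hnc
  have hij : i ≠ j := Fin.ne_of_val_ne (by omega)
  have hlam : lam i ≤ lam j := hmono (Fin.le_iff_val_le_val.2 (by omega))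
  have hbi := hb i
  have hbj := hb j
  by_cases hbij : b i ≤ b j
  · exact ⟨transvection i j hij (ZMod.castHom (pow_dvd_pow p hlam) _).toAddMonoidHom, i,
      b j - (lam j - lam i), by omega, by omega, addOrderOf_transvection_apply hp hij _ hg
        (ZMod.addOrderOf_castHom_prime_pow hp hlam (hg j)) (by omega)⟩
  · exact ⟨transvection j i hij.symm (ZMod.primePowInclusion p (lam i) (lam j)), j, b i,
      by omega, by omega, addOrderOf_transvection_apply hp hij.symm _ hg
        ((ZMod.addOrderOf_primePowInclusion hlam _).trans (hg i)) (by omega)⟩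

lemma exists_canonical_of_mem_typeSet (hp : p.Prime) (hmono : Monotone lam)
    {g : ∀ i, ZMod (p ^ lam i)} {b : Fin n → ℕ} (hb : ∀ i, b i ≤ lam i)
    (hg : g ∈ TypeSet p lam b) :
    ∃ a : Fin n → ℕ, (∀ i, a i ≤ lam i) ∧ Canonical lam a ∧
      ∃ φ : AddAut (∀ i, ZMod (p ^ lam i)), φ g ∈ TypeSet p lam a := by
  classical
  induction hm : ∑ i, (lam i - b i) using Nat.strong_induction_on generalizing g b with
  | _ m ih =>
    by_cases hcan : Canonical lam b
    · exact ⟨b, hb, hcan, AddEquiv.refl _, hg⟩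
    obtain ⟨ψ, k, c, hbc, hc, hψ⟩ := exists_addAut_raise_of_not_canonical hp hmono hb hg hcan
    have hbc' : ∀ i, Function.update b k c i ≤ lam i := fun i => by
      rcases eq_or_ne i k with rfl | hi
      · simpa
      · simpa [Function.update_of_ne hi] using hb i
    obtain ⟨a, hal, hca, φ, hφ⟩ := ih _ (hm ▸ sum_tsub_update_lt hbc hc) hbc' hψ rfl
    exact ⟨a, hal, hca, ψ.trans φ, hφ⟩

end Existence

theorem unique_canonical_type_general (p : ℕ) (hp : p.Prime) [NeZero p]
    (n : ℕ) (lam : Fin n → ℕ) (hmono : Monotone lam)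
    (g : ∀ i : Fin n, ZMod (p ^ lam i)) :
    ∃! a : Fin n → ℕ, (∀ i, a i ≤ lam i) ∧ Canonical lam a ∧
      ∃ φ : AddAut (∀ i : Fin n, ZMod (p ^ lam i)), φ g ∈ TypeSet p lam a := by
  choose b hb hg using fun i => ZMod.exists_addOrderOf_eq_prime_pow hp (g i)
  obtain ⟨a, hal, hca, φ, hφ⟩ := exists_canonical_of_mem_typeSet hp hmono hb hg
  refine ⟨a, ⟨hal, hca, φ, hφ⟩, ?_⟩
  rintro a' ⟨hal', hca', φ', hφ'⟩
  have hcrit : ∀ s t, (∀ i, a' i ≤ t ∨ s + a' i ≤ lam i) ↔ ∀ i, a i ≤ t ∨ s + a i ≤ lam i :=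
    fun s t => by
      rw [← mem_nsmulAddTorsion_iff_of_mem_typeSet hp.one_lt hφ',
        ← mem_nsmulAddTorsion_iff_of_mem_typeSet hp.one_lt hφ, φ'.map_mem_nsmulAddTorsion_iff,
        φ.map_mem_nsmulAddTorsion_iff]
  exact funext fun i => le_antisymm (hca.le_of_forall_imp hal' (fun s t => (hcrit s t).2) i)
    (hca'.le_of_forall_imp hal (fun s t => (hcrit s t).1) i)

/-- Every automorphism class of `G = Z_{p^{λ_1}} × ⋯ × Z_{p^{λ_n}}` contains a unique
canonical type: for every `g ∈ G` there is exactly one canonical tuple `a` (with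
`0 ≤ a_i ≤ λ_i`) such that the `Aut(G)`-orbit of `g` meets `T(a)`. -/
theorem unique_canonical_type (p : ℕ) (hp : p.Prime) [NeZero p]
    (n : ℕ) (hn : 1 ≤ n) (lam : Fin n → ℕ) (hlam : ∀ i, 1 ≤ lam i) (hmono : Monotone lam)
    (g : ∀ i : Fin n, ZMod (p ^ lam i)) :
    ∃! a : Fin n → ℕ, (∀ i, a i ≤ lam i) ∧ Canonical lam a ∧
      ∃ φ : AddAut (∀ i : Fin n, ZMod (p ^ lam i)), φ g ∈ TypeSet p lam a :=
  unique_canonical_type_general p hp n lam hmono g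
end
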